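/- arXiv:2103.00628 — 3 statements merged into one kernel-verified Lean document; each statement's English description precedes it below -/
import Mathlib

section
/- Let U = (v¹, v², v³, v⁴, v⁵, v⁶) be functions from [0,L] to ℂ such that v¹, v³ are C² on [0,L], v⁵ is C¹ on [0,L] and twice continuously differentiable on [0,β] and on [β,L], v², v⁴, v⁶ are C¹ on [0,L], and v¹, v², v³, v⁴, v⁵, v⁶ all vanish at x = 0 and x = L. Define (𝒜U)₂ := (k₁/ρ₁)(v¹′ + v³ + l v⁵)′ + (l k₃/ρ₁)(v⁵′ − l v¹), (𝒜U)₄ := (k₂/ρ₂) v³′′ − (k₁/ρ₂)(v¹′ + v³ + l v⁵), (𝒜U)₆ := (k₃/ρ₁)(v⁵′ − l v¹)′ − (l k₁/ρ₁)(v¹′ + v³ + l v⁵) − (a(x)/ρ₁) v⁶ (′ denoting d/dx). Then Re ∫₀^L [ k₁ (v²′ + v⁴ + l v⁶) conj(v¹′ + v³ + l v⁵) + ρ₁ (𝒜U)₂ conj(v²) + k₂ v⁴′ conj(v³′) + ρ₂ (𝒜U)₄ conj(v⁴) + k₃ (v⁶′ − l v²) conj(v⁵′ − l v¹) + ρ₁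 (𝒜U)₆ conj(v⁶) ] dx = − a₀ ∫₀^β |v⁶|² dx ≤ 0. -/
/-! On an interval where `v⁵` is `C²` and the damping equals a constant `c`, the real part of the
integrand is `G' - c ‖v⁶‖²` for the flux
`G = Re (k₁ v² conj (v¹' + v³ + l v⁵) + k₂ v⁴ conj v³' + k₃ v⁶ conj (v⁵' - l v¹))`:
after the product rule the remaining cross terms pair up as `z conj w - w conj z`, which are
purely imaginary. Integrating over `(0, β)` and `(β, L)`, the two fluxes agree at `β`, where
`v¹, v³, v⁵` are differentiable, and vanish at `0` and `L`, where `v², v⁴, v⁶` do. -/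

open Set Filter MeasureTheory Topology ComplexConjugate

noncomputable section

variable (ρ₁ ρ₂ k₁ k₂ k₃ l : ℝ) (a : ℝ → ℝ) (D : (ℝ → ℂ) → ℝ → ℂ) (v1 v2 v3 v4 v5 v6 : ℝ → ℂ)

/-- `D` plays the role of `d/dx`: it is `deriv` in the theorem, and `derivWithin · (Icc c d)`
gives the continuous extension of the integrand to a closed interval. -/
def bresseDensity (x : ℝ) : ℂ :=
  (k₁ : ℂ) * ((D v2 x + v4 x + (l : ℂ) * v6 x) * conj (D v1 x + v3 x + (l : ℂ) * v5 x))
    + (ρ₁ : ℂ) * ((((k₁ / ρ₁ : ℝ) : ℂ) * D (fun y => D v1 y + v3 y + (l : ℂ) * v5 y) x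
      + ((l * k₃ / ρ₁ : ℝ) : ℂ) * (D v5 x - (l : ℂ) * v1 x)) * conj (v2 x))
    + (k₂ : ℂ) * (D v4 x * conj (D v3 x))
    + (ρ₂ : ℂ) * ((((k₂ / ρ₂ : ℝ) : ℂ) * D (D v3) x
      - ((k₁ / ρ₂ : ℝ) : ℂ) * (D v1 x + v3 x + (l : ℂ) * v5 x)) * conj (v4 x))
    + (k₃ : ℂ) * ((D v6 x - (l : ℂ) * v2 x) * conj (D v5 x - (l : ℂ) * v1 x))
    + (ρ₁ : ℂ) * ((((k₃ / ρ₁ : ℝ) : ℂ) * D (fun y => D v5 y - (l : ℂ) * v1 y) x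
      - ((l * k₁ / ρ₁ : ℝ) : ℂ) * (D v1 x + v3 x + (l : ℂ) * v5 x)
      - ((a x / ρ₁ : ℝ) : ℂ) * v6 x) * conj (v6 x))

def bresseFlux (x : ℝ) : ℂ :=
  (k₁ : ℂ) * (v2 x * conj (D v1 x + v3 x + (l : ℂ) * v5 x)) + (k₂ : ℂ) * (v4 x * conj (D v3 x))
    + (k₃ : ℂ) * (v6 x * conj (D v5 x - (l : ℂ) * v1 x))

variable {ρ₁ ρ₂ k₁ k₂ k₃ l a D v1 v2 v3 v4 v5 v6}

theorem hasDerivAt_re_bresseFlux_deriv (hρ₁ : ρ₁ ≠ 0) (hρ₂ : ρ₂ ≠ 0) {x : ℝ}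
    (h2 : DifferentiableAt ℝ v2 x) (h4 : DifferentiableAt ℝ v4 x) (h6 : DifferentiableAt ℝ v6 x)
    (hφ : DifferentiableAt ℝ (fun y => deriv v1 y + v3 y + (l : ℂ) * v5 y) x)
    (h3 : DifferentiableAt ℝ (deriv v3) x)
    (hψ : DifferentiableAt ℝ (fun y => deriv v5 y - (l : ℂ) * v1 y) x) :
    HasDerivAt (fun y => (bresseFlux k₁ k₂ k₃ l deriv v1 v2 v3 v4 v5 v6 y).re)
      ((bresseDensity ρ₁ ρ₂ k₁ k₂ k₃ l a deriv v1 v2 v3 v4 v5 v6 x).re + a x * ‖v6 x‖ ^ 2) x := by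
  have hconj : ∀ {g : ℝ → ℂ}, DifferentiableAt ℝ g x →
      HasDerivAt (fun y => conj (g y)) (conj (deriv g x)) x := fun hg => hg.hasDerivAt.star
  have hflux := (((h2.hasDerivAt.mul (hconj hφ)).const_mul (k₁ : ℂ)).add
    ((h4.hasDerivAt.mul (hconj h3)).const_mul (k₂ : ℂ))).add
    ((h6.hasDerivAt.mul (hconj hψ)).const_mul (k₃ : ℂ))
  refine (Complex.reCLM.hasFDerivAt.comp_hasDerivAt x hflux).congr_deriv ?_
  simp only [bresseDensity, Complex.reCLM_apply, Complex.add_re, Complex.sub_re, Complex.mul_re,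
    Complex.add_im, Complex.sub_im, Complex.mul_im, Complex.conj_re, Complex.conj_im,
    Complex.ofReal_re, Complex.ofReal_im, Complex.sq_norm, Complex.normSq_apply]
  field_simp
  ring

theorem bresseDensity_derivWithin_eq_deriv {s : Set ℝ} {x : ℝ} (hs : s ∈ 𝓝 x) :
    bresseDensity ρ₁ ρ₂ k₁ k₂ k₃ l a (fun f => derivWithin f s) v1 v2 v3 v4 v5 v6 x
      = bresseDensity ρ₁ ρ₂ k₁ k₂ k₃ l a deriv v1 v2 v3 v4 v5 v6 x := by
  have near : ∀ᶠ y in 𝓝 x, ∀ f : ℝ → ℂ, derivWithin f s y = deriv f y :=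
    (eventually_mem_nhds_iff.2 hs).mono fun _ hy _ => derivWithin_of_mem_nhds hy
  have hφ : deriv (fun y => derivWithin v1 s y + v3 y + (l : ℂ) * v5 y) x
      = deriv (fun y => deriv v1 y + v3 y + (l : ℂ) * v5 y) x :=
    Filter.EventuallyEq.deriv_eq <| near.mono fun y hy => by simp only [hy]
  have hψ : deriv (fun y => derivWithin v5 s y - (l : ℂ) * v1 y) x
      = deriv (fun y => deriv v5 y - (l : ℂ) * v1 y) x :=
    Filter.EventuallyEq.deriv_eq <| near.mono fun y hy => by simp only [hy]
  have h3 : deriv (derivWithin v3 s) x = deriv (deriv v3) x :=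
    Filter.EventuallyEq.deriv_eq <| near.mono fun y hy => hy v3
  simp only [bresseDensity, near.self_of_nhds, hφ, hψ, h3]

theorem continuousOn_bresseDensity_derivWithin {c d ac : ℝ} (hcd : c < d)
    (hv1 : ContDiffOn ℝ 2 v1 (Icc c d)) (hv2 : ContDiffOn ℝ 1 v2 (Icc c d))
    (hv3 : ContDiffOn ℝ 2 v3 (Icc c d)) (hv4 : ContDiffOn ℝ 1 v4 (Icc c d))
    (hv5 : ContDiffOn ℝ 2 v5 (Icc c d)) (hv6 : ContDiffOn ℝ 1 v6 (Icc c d)) :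
    ContinuousOn (bresseDensity ρ₁ ρ₂ k₁ k₂ k₃ l (fun _ => ac) (fun f => derivWithin f (Icc c d))
      v1 v2 v3 v4 v5 v6) (Icc c d) := by
  have hU := uniqueDiffOn_Icc hcd
  have hD : ∀ {f : ℝ → ℂ}, ContDiffOn ℝ 1 f (Icc c d) →
      ContinuousOn (derivWithin f (Icc c d)) (Icc c d) :=
    fun hf => hf.continuousOn_derivWithin hU le_rfl
  have hD2 : ∀ {f : ℝ → ℂ}, ContDiffOn ℝ 2 f (Icc c d) →
      ContDiffOn ℝ 1 (derivWithin f (Icc c d)) (Icc c d) :=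
    fun hf => hf.derivWithin hU le_rfl
  have hφ := hD (((hD2 hv1).add (hv3.of_le one_le_two)).add
    ((contDiffOn_const (c := (l : ℂ))).mul (hv5.of_le one_le_two)))
  have hψ := hD ((hD2 hv5).sub ((contDiffOn_const (c := (l : ℂ))).mul (hv1.of_le one_le_two)))
  have h3 := hD (hD2 hv3)
  have := hD (hv1.of_le one_le_two)
  have := hD (hv3.of_le one_le_two)
  have := hD (hv5.of_le one_le_two)
  have := hD hv2
  have := hD hv4
  have := hD hv6
  have := hv1.continuousOn
  have := hv2.continuousOn
  have := hv3.continuousOn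
  have := hv4.continuousOn
  have := hv5.continuousOn
  have := hv6.continuousOn
  unfold bresseDensity
  fun_prop

theorem continuousOn_bresseFlux_derivWithin {c d : ℝ} (hcd : c < d)
    (hv1 : ContDiffOn ℝ 1 v1 (Icc c d)) (hv2 : ContinuousOn v2 (Icc c d))
    (hv3 : ContDiffOn ℝ 1 v3 (Icc c d)) (hv4 : ContinuousOn v4 (Icc c d))
    (hv5 : ContDiffOn ℝ 1 v5 (Icc c d)) (hv6 : ContinuousOn v6 (Icc c d)) :
    ContinuousOn (bresseFlux k₁ k₂ k₃ l (fun f => derivWithin f (Icc c d)) v1 v2 v3 v4 v5 v6)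
      (Icc c d) := by
  have hU := uniqueDiffOn_Icc hcd
  have := hv1.continuousOn_derivWithin hU le_rfl
  have := hv3.continuousOn_derivWithin hU le_rfl
  have := hv5.continuousOn_derivWithin hU le_rfl
  have := hv1.continuousOn
  have := hv3.continuousOn
  have := hv5.continuousOn
  unfold bresseFlux
  fun_prop

theorem intervalIntegrable_bresseDensity {c d ac : ℝ} (hcd : c < d)
    (hv1 : ContDiffOn ℝ 2 v1 (Icc c d)) (hv2 : ContDiffOn ℝ 1 v2 (Icc c d))
    (hv3 : ContDiffOn ℝ 2 v3 (Icc c d)) (hv4 : ContDiffOn ℝ 1 v4 (Icc c d))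
    (hv5 : ContDiffOn ℝ 2 v5 (Icc c d)) (hv6 : ContDiffOn ℝ 1 v6 (Icc c d))
    (ha : ∀ x ∈ Ioo c d, a x = ac) :
    IntervalIntegrable (bresseDensity ρ₁ ρ₂ k₁ k₂ k₃ l a deriv v1 v2 v3 v4 v5 v6) volume c d := by
  have hF : IntervalIntegrable (bresseDensity ρ₁ ρ₂ k₁ k₂ k₃ l (fun _ => ac)
      (fun f => derivWithin f (Icc c d)) v1 v2 v3 v4 v5 v6) volume c d :=
    (continuousOn_bresseDensity_derivWithin hcd hv1 hv2 hv3 hv4 hv5 hv6).intervalIntegrable_of_Icc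
      hcd.le
  refine hF.congr_uIoo fun x hx => ?_
  rw [uIoo_of_le hcd.le] at hx
  rw [bresseDensity_derivWithin_eq_deriv (Icc_mem_nhds hx.1 hx.2)]
  simp only [bresseDensity, ha x hx]

theorem bresseFlux_eq_zero {x : ℝ} (h2 : v2 x = 0) (h4 : v4 x = 0) (h6 : v6 x = 0) :
    bresseFlux k₁ k₂ k₃ l D v1 v2 v3 v4 v5 v6 x = 0 := by
  simp [bresseFlux, h2, h4, h6]

theorem bresseFlux_derivWithin_eq_deriv {s : Set ℝ} {x : ℝ} (hs : UniqueDiffWithinAt ℝ s x)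
    (h1 : DifferentiableAt ℝ v1 x) (h3 : DifferentiableAt ℝ v3 x) (h5 : DifferentiableAt ℝ v5 x) :
    bresseFlux k₁ k₂ k₃ l (fun f => derivWithin f s) v1 v2 v3 v4 v5 v6 x
      = bresseFlux k₁ k₂ k₃ l deriv v1 v2 v3 v4 v5 v6 x := by
  simp only [bresseFlux, h1.derivWithin hs, h3.derivWithin hs, h5.derivWithin hs]

theorem re_integral_bresseDensity (hρ₁ : ρ₁ ≠ 0) (hρ₂ : ρ₂ ≠ 0) {c d ac : ℝ} (hcd : c < d)
    (hv1 : ContDiffOn ℝ 2 v1 (Icc c d)) (hv2 : ContDiffOn ℝ 1 v2 (Icc c d))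
    (hv3 : ContDiffOn ℝ 2 v3 (Icc c d)) (hv4 : ContDiffOn ℝ 1 v4 (Icc c d))
    (hv5 : ContDiffOn ℝ 2 v5 (Icc c d)) (hv6 : ContDiffOn ℝ 1 v6 (Icc c d))
    (ha : ∀ x ∈ Ioo c d, a x = ac) :
    (∫ x in c..d, bresseDensity ρ₁ ρ₂ k₁ k₂ k₃ l a deriv v1 v2 v3 v4 v5 v6 x).re
      = (bresseFlux k₁ k₂ k₃ l (fun f => derivWithin f (Icc c d)) v1 v2 v3 v4 v5 v6 d).re
        - (bresseFlux k₁ k₂ k₃ l (fun f => derivWithin f (Icc c d)) v1 v2 v3 v4 v5 v6 c).re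
        - ac * ∫ x in c..d, ‖v6 x‖ ^ 2 := by
  set I := bresseDensity ρ₁ ρ₂ k₁ k₂ k₃ l a deriv v1 v2 v3 v4 v5 v6
  set F := bresseFlux k₁ k₂ k₃ l (fun f => derivWithin f (Icc c d)) v1 v2 v3 v4 v5 v6
  have hderiv : ∀ x ∈ Ioo c d, HasDerivAt (fun y => (F y).re) ((I x).re + ac * ‖v6 x‖ ^ 2) x := by
    intro x hx
    have hs : Icc c d ∈ 𝓝 x := Icc_mem_nhds hx.1 hx.2
    have hd : ∀ {n} {f : ℝ → ℂ}, ContDiffOn ℝ n f (Icc c d) → n ≠ 0 → DifferentiableAt ℝ f x :=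
      fun hf hn => (hf.contDiffAt hs).differentiableAt hn
    have hd' : ∀ {f : ℝ → ℂ}, ContDiffOn ℝ 2 f (Icc c d) → DifferentiableAt ℝ (deriv f) x :=
      fun hf => ((hf.contDiffAt hs).derivWithin (m := 1) le_rfl).differentiableAt one_ne_zero
    rw [← ha x hx]
    refine (hasDerivAt_re_bresseFlux_deriv hρ₁ hρ₂ (hd hv2 one_ne_zero) (hd hv4 one_ne_zero)
      (hd hv6 one_ne_zero) (((hd' hv1).add (hd hv3 two_ne_zero)).add
        ((hd hv5 two_ne_zero).const_mul _)) (hd' hv3)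
      ((hd' hv5).sub ((hd hv1 two_ne_zero).const_mul _))).congr_of_eventuallyEq ?_
    filter_upwards [eventually_mem_nhds_iff.2 hs] with y hy
    simp only [F, bresseFlux, derivWithin_of_mem_nhds hy]
  have hF : ContinuousOn (fun y => (F y).re) (Icc c d) :=
    Complex.continuous_re.comp_continuousOn (continuousOn_bresseFlux_derivWithin hcd
      (hv1.of_le one_le_two) hv2.continuousOn (hv3.of_le one_le_two) hv4.continuousOn
      (hv5.of_le one_le_two) hv6.continuousOn)
  have hI : IntervalIntegrable I volume c d :=
    intervalIntegrable_bresseDensity hcd hv1 hv2 hv3 hv4 hv5 hv6 ha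
  have hIre : IntervalIntegrable (fun x => (I x).re) volume c d := ⟨hI.1.re, hI.2.re⟩
  have hsq : IntervalIntegrable (fun x => ac * ‖v6 x‖ ^ 2) volume c d :=
    ((hv6.continuousOn.norm.pow 2).intervalIntegrable_of_Icc hcd.le).const_mul ac
  calc (∫ x in c..d, I x).re
      = ∫ x in c..d, (I x).re := (intervalIntegral.intervalIntegral_re hI).symm
    _ = (∫ x in c..d, ((I x).re + ac * ‖v6 x‖ ^ 2)) - ∫ x in c..d, ac * ‖v6 x‖ ^ 2 := by
      rw [intervalIntegral.integral_add hIre hsq]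
      ring
    _ = (F d).re - (F c).re - ac * ∫ x in c..d, ‖v6 x‖ ^ 2 := by
      rw [intervalIntegral.integral_eq_sub_of_hasDerivAt_of_le hcd.le hF hderiv (hIre.add hsq),
        intervalIntegral.integral_const_mul]

theorem re_integral_bresseDensity_eq_neg_damping (hρ₁ : ρ₁ ≠ 0) (hρ₂ : ρ₂ ≠ 0)
    {c d e a₁ a₂ : ℝ} (hcd : c < d) (hde : d < e)
    (hv1 : ContDiffOn ℝ 2 v1 (Icc c e)) (hv2 : ContDiffOn ℝ 1 v2 (Icc c e))
    (hv3 : ContDiffOn ℝ 2 v3 (Icc c e)) (hv4 : ContDiffOn ℝ 1 v4 (Icc c e))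
    (hv5 : ContDiffOn ℝ 1 v5 (Icc c e)) (hv5l : ContDiffOn ℝ 2 v5 (Icc c d))
    (hv5r : ContDiffOn ℝ 2 v5 (Icc d e)) (hv6 : ContDiffOn ℝ 1 v6 (Icc c e))
    (hc2 : v2 c = 0) (hc4 : v4 c = 0) (hc6 : v6 c = 0)
    (he2 : v2 e = 0) (he4 : v4 e = 0) (he6 : v6 e = 0)
    (ha₁ : ∀ x ∈ Ioo c d, a x = a₁) (ha₂ : ∀ x ∈ Ioo d e, a x = a₂) :
    (∫ x in c..e, bresseDensity ρ₁ ρ₂ k₁ k₂ k₃ l a deriv v1 v2 v3 v4 v5 v6 x).re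
      = -(a₁ * ∫ x in c..d, ‖v6 x‖ ^ 2) - a₂ * ∫ x in d..e, ‖v6 x‖ ^ 2 := by
  have hl : Icc c d ⊆ Icc c e := Icc_subset_Icc le_rfl hde.le
  have hr : Icc d e ⊆ Icc c e := Icc_subset_Icc hcd.le le_rfl
  have hd : Icc c e ∈ 𝓝 d := Icc_mem_nhds hcd hde
  have hglue : ∀ {s : Set ℝ}, UniqueDiffWithinAt ℝ s d →
      bresseFlux k₁ k₂ k₃ l (fun f => derivWithin f s) v1 v2 v3 v4 v5 v6 d
        = bresseFlux k₁ k₂ k₃ l deriv v1 v2 v3 v4 v5 v6 d := fun hs =>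
    bresseFlux_derivWithin_eq_deriv hs ((hv1.contDiffAt hd).differentiableAt two_ne_zero)
      ((hv3.contDiffAt hd).differentiableAt two_ne_zero)
      ((hv5.contDiffAt hd).differentiableAt one_ne_zero)
  rw [← intervalIntegral.integral_add_adjacent_intervals
      (intervalIntegrable_bresseDensity hcd (hv1.mono hl) (hv2.mono hl) (hv3.mono hl)
        (hv4.mono hl) hv5l (hv6.mono hl) ha₁)
      (intervalIntegrable_bresseDensity hde (hv1.mono hr) (hv2.mono hr) (hv3.mono hr)
        (hv4.mono hr) hv5r (hv6.mono hr) ha₂),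
    Complex.add_re, re_integral_bresseDensity hρ₁ hρ₂ hcd (hv1.mono hl) (hv2.mono hl)
      (hv3.mono hl) (hv4.mono hl) hv5l (hv6.mono hl) ha₁,
    re_integral_bresseDensity hρ₁ hρ₂ hde (hv1.mono hr) (hv2.mono hr) (hv3.mono hr)
      (hv4.mono hr) hv5r (hv6.mono hr) ha₂,
    hglue (uniqueDiffOn_Icc hcd d (right_mem_Icc.2 hcd.le)),
    hglue (uniqueDiffOn_Icc hde d (left_mem_Icc.2 hde.le)),
    bresseFlux_eq_zero hc2 hc4 hc6, bresseFlux_eq_zero he2 he4 he6]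
  ring

end

theorem bresse_generator_dissipative_general
    (ρ₁ ρ₂ k₁ k₂ k₃ l L β a₀ : ℝ)
    (hrho1 : 0 < ρ₁) (hrho2 : 0 < ρ₂)
    (ha0 : 0 < a₀) (hbeta : 0 < β) (hbetaL : β < L)
    (v1 v2 v3 v4 v5 v6 : ℝ → ℂ)
    (hv1 : ContDiffOn ℝ 2 v1 (Icc 0 L)) (hv3 : ContDiffOn ℝ 2 v3 (Icc 0 L))
    (hv5 : ContDiffOn ℝ 1 v5 (Icc 0 L))
    (hv5l : ContDiffOn ℝ 2 v5 (Icc 0 β)) (hv5r : ContDiffOn ℝ 2 v5 (Icc β L))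
    (hv2 : ContDiffOn ℝ 1 v2 (Icc 0 L)) (hv4 : ContDiffOn ℝ 1 v4 (Icc 0 L))
    (hv6 : ContDiffOn ℝ 1 v6 (Icc 0 L))
    (hbc0 : v1 0 = 0 ∧ v2 0 = 0 ∧ v3 0 = 0 ∧ v4 0 = 0 ∧ v5 0 = 0 ∧ v6 0 = 0)
    (hbcL : v1 L = 0 ∧ v2 L = 0 ∧ v3 L = 0 ∧ v4 L = 0 ∧ v5 L = 0 ∧ v6 L = 0)
    (A2 A4 A6 : ℝ → ℂ)
    (hA2 : ∀ x, A2 x = ((k₁ / ρ₁ : ℝ) : ℂ) * deriv (fun y => deriv v1 y + v3 y + (l : ℂ) * v5 y) x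
      + ((l * k₃ / ρ₁ : ℝ) : ℂ) * (deriv v5 x - (l : ℂ) * v1 x))
    (hA4 : ∀ x, A4 x = ((k₂ / ρ₂ : ℝ) : ℂ) * deriv (deriv v3) x
      - ((k₁ / ρ₂ : ℝ) : ℂ) * (deriv v1 x + v3 x + (l : ℂ) * v5 x))
    (hA6 : ∀ x, A6 x = ((k₃ / ρ₁ : ℝ) : ℂ) * deriv (fun y => deriv v5 y - (l : ℂ) * v1 y) x
      - ((l * k₁ / ρ₁ : ℝ) : ℂ) * (deriv v1 x + v3 x + (l : ℂ) * v5 x)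
      - (((if x < β then a₀ else 0) / ρ₁ : ℝ) : ℂ) * v6 x) :
    (∫ x in (0 : ℝ)..L,
      ((k₁ : ℂ) * ((deriv v2 x + v4 x + (l : ℂ) * v6 x) *
          starRingEnd ℂ (deriv v1 x + v3 x + (l : ℂ) * v5 x))
        + (ρ₁ : ℂ) * (A2 x * starRingEnd ℂ (v2 x))
        + (k₂ : ℂ) * (deriv v4 x * starRingEnd ℂ (deriv v3 x))
        + (ρ₂ : ℂ) * (A4 x * starRingEnd ℂ (v4 x))
        + (k₃ : ℂ) * ((deriv v6 x - (l : ℂ) * v2 x) *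
            starRingEnd ℂ (deriv v5 x - (l : ℂ) * v1 x))
        + (ρ₁ : ℂ) * (A6 x * starRingEnd ℂ (v6 x)))).re
      = -a₀ * (∫ x in (0 : ℝ)..β, ‖v6 x‖ ^ 2) ∧
    -a₀ * (∫ x in (0 : ℝ)..β, ‖v6 x‖ ^ 2) ≤ 0 := by
  obtain ⟨-, hv20, -, hv40, -, hv60⟩ := hbc0
  obtain ⟨-, hv2L, -, hv4L, -, hv6L⟩ := hbcL
  have hre : (∫ x in (0 : ℝ)..L, bresseDensity ρ₁ ρ₂ k₁ k₂ k₃ l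
      (fun x => if x < β then a₀ else 0) deriv v1 v2 v3 v4 v5 v6 x).re
        = -a₀ * ∫ x in (0 : ℝ)..β, ‖v6 x‖ ^ 2 := by
    rw [re_integral_bresseDensity_eq_neg_damping hrho1.ne' hrho2.ne' hbeta hbetaL hv1 hv2 hv3 hv4
      hv5 hv5l hv5r hv6 hv20 hv40 hv60 hv2L hv4L hv6L (fun x hx => if_pos hx.2)
      (fun x hx => if_neg (not_lt.2 hx.1.le))]
    ring
  simp only [hA2, hA4, hA6]
  refine ⟨hre, ?_⟩
  rw [neg_mul, neg_nonpos]
  exact mul_nonneg ha0.le (intervalIntegral.integral_nonneg hbeta.le fun x _ => sq_nonneg _)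

/-- Dissipativity of the Bresse generator:
`Re (𝒜U, U)_H = −a₀ ∫₀^β |v⁶|² dx ≤ 0`. -/
theorem bresse_generator_dissipative
    (ρ₁ ρ₂ k₁ k₂ k₃ l L β a₀ : ℝ)
    (hrho1 : 0 < ρ₁) (hrho2 : 0 < ρ₂) (hk1 : 0 < k₁) (hk2 : 0 < k₂) (hk3 : 0 < k₃)
    (hl : 0 < l) (hL : 0 < L) (ha0 : 0 < a₀) (hbeta : 0 < β) (hbetaL : β < L)
    (v1 v2 v3 v4 v5 v6 : ℝ → ℂ)
    (hv1 : ContDiffOn ℝ 2 v1 (Icc 0 L)) (hv3 : ContDiffOn ℝ 2 v3 (Icc 0 L))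
    (hv5 : ContDiffOn ℝ 1 v5 (Icc 0 L))
    (hv5l : ContDiffOn ℝ 2 v5 (Icc 0 β)) (hv5r : ContDiffOn ℝ 2 v5 (Icc β L))
    (hv2 : ContDiffOn ℝ 1 v2 (Icc 0 L)) (hv4 : ContDiffOn ℝ 1 v4 (Icc 0 L))
    (hv6 : ContDiffOn ℝ 1 v6 (Icc 0 L))
    (hbc0 : v1 0 = 0 ∧ v2 0 = 0 ∧ v3 0 = 0 ∧ v4 0 = 0 ∧ v5 0 = 0 ∧ v6 0 = 0)
    (hbcL : v1 L = 0 ∧ v2 L = 0 ∧ v3 L = 0 ∧ v4 L = 0 ∧ v5 L = 0 ∧ v6 L = 0)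
    (A2 A4 A6 : ℝ → ℂ)
    (hA2 : ∀ x, A2 x = ((k₁ / ρ₁ : ℝ) : ℂ) * deriv (fun y => deriv v1 y + v3 y + (l : ℂ) * v5 y) x
      + ((l * k₃ / ρ₁ : ℝ) : ℂ) * (deriv v5 x - (l : ℂ) * v1 x))
    (hA4 : ∀ x, A4 x = ((k₂ / ρ₂ : ℝ) : ℂ) * deriv (deriv v3) x
      - ((k₁ / ρ₂ : ℝ) : ℂ) * (deriv v1 x + v3 x + (l : ℂ) * v5 x))
    (hA6 : ∀ x, A6 x = ((k₃ / ρ₁ : ℝ) : ℂ) * deriv (fun y => deriv v5 y - (l : ℂ) * v1 y) x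
      - ((l * k₁ / ρ₁ : ℝ) : ℂ) * (deriv v1 x + v3 x + (l : ℂ) * v5 x)
      - (((if x < β then a₀ else 0) / ρ₁ : ℝ) : ℂ) * v6 x) :
    (∫ x in (0 : ℝ)..L,
      ((k₁ : ℂ) * ((deriv v2 x + v4 x + (l : ℂ) * v6 x) *
          starRingEnd ℂ (deriv v1 x + v3 x + (l : ℂ) * v5 x))
        + (ρ₁ : ℂ) * (A2 x * starRingEnd ℂ (v2 x))
        + (k₂ : ℂ) * (deriv v4 x * starRingEnd ℂ (deriv v3 x))
        + (ρ₂ : ℂ) * (A4 x * starRingEnd ℂ (v4 x))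
        + (k₃ : ℂ) * ((deriv v6 x - (l : ℂ) * v2 x) *
            starRingEnd ℂ (deriv v5 x - (l : ℂ) * v1 x))
        + (ρ₁ : ℂ) * (A6 x * starRingEnd ℂ (v6 x)))).re
      = -a₀ * (∫ x in (0 : ℝ)..β, ‖v6 x‖ ^ 2) ∧
    -a₀ * (∫ x in (0 : ℝ)..β, ‖v6 x‖ ^ 2) ≤ 0 :=
  bresse_generator_dissipative_general ρ₁ ρ₂ k₁ k₂ k₃ l L β a₀ hrho1 hrho2 ha0 hbeta hbetaL v1 v2 v3
    v4 v5 v6 hv1 hv3 hv5 hv5l hv5r hv2 hv4 hv6 hbc0 hbcL A2 A4 A6 hA2 hA4 hA6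
end

section
/- There exists a constant c > 0 (depending only on k₁, k₂, k₃, l, L) such that for all C¹ functions v¹, v³, v⁵ : [0,L] → ℂ with v¹(0) = v¹(L) = v³(0) = v³(L) = v⁵(0) = v⁵(L) = 0, one has ∫₀^L ( k₁ |v¹′ + v³ + l v⁵|² + k₂ |v³′|² + k₃ |v⁵′ − l v¹|² ) dx ≥ c ∫₀^L ( |v¹′|² + |v³′|² + |v⁵′|² + |v¹|² + |v³|² + |v⁵|² ) dx. -/
/-!
The form controls `‖v₃'‖²` and the two strains `A = v₁' + v₃ + l v₅` and `C = v₅' - l v₁`.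
The Poincaré inequality `∫ ‖g‖² ≤ L² ∫ ‖g'‖²` for `g(0) = 0` bounds `v₃` by `v₃'`. The pair
`(v₁, v₅)` is handled by complexifying the rotation: `w± = v₁ ± i v₅` satisfy
`w±' ∓ i l w± = (A - v₃) ± i C`, and multiplying by the unimodular gauge `e^{∓ i l x}` turns the
left side into a plain derivative, so Poincaré bounds `w±`, hence (parallelogram law) `v₁` and
`v₅`, by `A`, `C` and `v₃`. Finally `v₁'` and `v₅'` are recovered from `A` and `C`.
-/

open Set Filter MeasureTheory intervalIntegral

variable {a b : ℝ}

theorem integral_mono_on_of_continuousOn {f g : ℝ → ℝ} (hab : a ≤ b)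
    (hf : ContinuousOn f (Icc a b)) (hg : ContinuousOn g (Icc a b))
    (h : ∀ x ∈ Icc a b, f x ≤ g x) : ∫ x in a..b, f x ≤ ∫ x in a..b, g x :=
  integral_mono_on hab (hf.intervalIntegrable_of_Icc hab) (hg.intervalIntegrable_of_Icc hab) h

theorem sq_integral_le_mul_integral_sq {f : ℝ → ℝ} (hab : a ≤ b)
    (hf : IntervalIntegrable f volume a b) (hf2 : IntervalIntegrable (fun x ↦ f x ^ 2) volume a b) :
    (∫ x in a..b, f x) ^ 2 ≤ (b - a) * ∫ x in a..b, f x ^ 2 := by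
  set M := ∫ x in a..b, f x with hM
  have hexpand : ∫ x in a..b, ((b - a) * f x - M) ^ 2
      = (b - a) * ((b - a) * (∫ x in a..b, f x ^ 2) - M ^ 2) := by
    have hpt (x : ℝ) :
        ((b - a) * f x - M) ^ 2 = (b - a) ^ 2 * f x ^ 2 - 2 * (b - a) * M * f x + M ^ 2 := by
      ring
    simp_rw [hpt]
    rw [integral_add ((hf2.const_mul _).sub (hf.const_mul _)) intervalIntegrable_const,
      integral_sub (hf2.const_mul _) (hf.const_mul _), intervalIntegral.integral_const_mul,
      intervalIntegral.integral_const_mul,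
      intervalIntegral.integral_const, smul_eq_mul, ← hM]
    ring
  have hnonneg : 0 ≤ (b - a) * ((b - a) * (∫ x in a..b, f x ^ 2) - M ^ 2) :=
    hexpand ▸ integral_nonneg hab fun x _ ↦ sq_nonneg _
  rcases hab.eq_or_lt with rfl | hlt
  · simp [M]
  · linarith [nonneg_of_mul_nonneg_right hnonneg (sub_pos.2 hlt)]

theorem integral_norm_sq_le_of_hasDerivAt {E : Type*} [NormedAddCommGroup E] [NormedSpace ℝ E]
    [CompleteSpace E] {g g' : ℝ → E} (hab : a ≤ b)
    (hg : ContinuousOn g (Icc a b)) (hg' : ContinuousOn g' (Icc a b))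
    (hderiv : ∀ x ∈ Ioo a b, HasDerivAt g (g' x) x) (ha : g a = 0) :
    ∫ x in a..b, ‖g x‖ ^ 2 ≤ (b - a) ^ 2 * ∫ x in a..b, ‖g' x‖ ^ 2 := by
  set M := ∫ x in a..b, ‖g' x‖
  have hbound : ∀ x ∈ Icc a b, ‖g x‖ ≤ M := by
    intro x ⟨hax, hxb⟩
    have hsub : Icc a x ⊆ Icc a b := Icc_subset_Icc le_rfl hxb
    have hftc : ∫ t in a..x, g' t = g x := by
      rw [integral_eq_sub_of_hasDerivAt_of_le hax (hg.mono hsub)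
        (fun t ht ↦ hderiv t ⟨ht.1, ht.2.trans_le hxb⟩)
        ((hg'.mono hsub).intervalIntegrable_of_Icc hax), ha, sub_zero]
    calc ‖g x‖ = ‖∫ t in a..x, g' t‖ := by rw [hftc]
      _ ≤ ∫ t in a..x, ‖g' t‖ := norm_integral_le_integral_norm hax
      _ ≤ M := integral_mono_interval le_rfl hax hxb (.of_forall fun _ ↦ norm_nonneg _)
          (hg'.norm.intervalIntegrable_of_Icc hab)
  calc ∫ x in a..b, ‖g x‖ ^ 2 ≤ ∫ _ in a..b, M ^ 2 :=
        integral_mono_on_of_continuousOn hab (hg.norm.pow 2) continuousOn_const fun x hx ↦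
          pow_le_pow_left₀ (norm_nonneg _) (hbound x hx) 2
    _ = (b - a) * M ^ 2 := by simp
    _ ≤ (b - a) * ((b - a) * ∫ x in a..b, ‖g' x‖ ^ 2) :=
        mul_le_mul_of_nonneg_left (sq_integral_le_mul_integral_sq hab
          (hg'.norm.intervalIntegrable_of_Icc hab) ((hg'.norm.pow 2).intervalIntegrable_of_Icc hab))
          (sub_nonneg.2 hab)
    _ = (b - a) ^ 2 * ∫ x in a..b, ‖g' x‖ ^ 2 := by ring

theorem integral_norm_sq_le_of_hasDerivAt_sub_smul {F : Type*} [NormedAddCommGroup F]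
    [NormedSpace ℂ F] [CompleteSpace F] {w w' : ℝ → F} {μ : ℂ} (hμ : μ.re = 0) (hab : a ≤ b)
    (hw : ContinuousOn w (Icc a b)) (hw' : ContinuousOn w' (Icc a b))
    (hderiv : ∀ x ∈ Ioo a b, HasDerivAt w (w' x) x) (ha : w a = 0) :
    ∫ x in a..b, ‖w x‖ ^ 2 ≤ (b - a) ^ 2 * ∫ x in a..b, ‖w' x - μ • w x‖ ^ 2 := by
  -- the gauge `exp (-μ x)` has modulus one and turns `w' - μ w` into a plain derivative
  set e : ℝ → ℂ := fun x ↦ Complex.exp (-(μ * x))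
  have he : ∀ x, HasDerivAt e (e x * -μ) x := fun x ↦ by
    simpa using (((hasDerivAt_id x).ofReal_comp.const_mul μ).neg).cexp
  have he_norm : ∀ x, ‖e x‖ = 1 := fun x ↦ by simp [e, Complex.norm_exp, hμ]
  have he_cont : Continuous e := continuous_iff_continuousAt.2 fun x ↦ (he x).continuousAt
  have key := integral_norm_sq_le_of_hasDerivAt (g := fun x ↦ e x • w x)
    (g' := fun x ↦ e x • (w' x - μ • w x)) hab (he_cont.continuousOn.smul hw)
    (he_cont.continuousOn.smul (hw'.sub (continuousOn_const.smul hw)))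
    (fun x hx ↦ ((he x).smul (hderiv x hx)).congr_deriv (by module))
    (by simp [ha])
  simpa only [norm_smul, he_norm, one_mul] using key

section

variable {F : Type*} [NormedAddCommGroup F] [InnerProductSpace ℂ F]

theorem integral_norm_add_I_smul_sq_add_integral_norm_sub_I_smul_sq {p q : ℝ → F}
    (hab : a ≤ b) (hp : ContinuousOn p (Icc a b)) (hq : ContinuousOn q (Icc a b)) :
    (∫ x in a..b, ‖p x + Complex.I • q x‖ ^ 2) + ∫ x in a..b, ‖p x - Complex.I • q x‖ ^ 2
      = 2 * ∫ x in a..b, (‖p x‖ ^ 2 + ‖q x‖ ^ 2) := by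
  have parallelogram (x : ℝ) :
      ‖p x + Complex.I • q x‖ ^ 2 + ‖p x - Complex.I • q x‖ ^ 2 = 2 * (‖p x‖ ^ 2 + ‖q x‖ ^ 2) := by
    simpa only [sq, norm_smul, Complex.norm_I, one_mul] using
      parallelogram_law_with_norm ℂ (p x) (Complex.I • q x)
  simp (disch := exact ContinuousOn.intervalIntegrable_of_Icc hab (by fun_prop)) only
    [← intervalIntegral.integral_add, parallelogram, intervalIntegral.integral_const_mul]

variable [CompleteSpace F]

theorem integral_norm_sq_add_norm_sq_le_of_hasDerivAt {u v u' v' : ℝ → F} (l : ℝ) (hab : a ≤ b)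
    (hu : ContinuousOn u (Icc a b)) (hv : ContinuousOn v (Icc a b))
    (hu' : ContinuousOn u' (Icc a b)) (hv' : ContinuousOn v' (Icc a b))
    (hu_deriv : ∀ x ∈ Ioo a b, HasDerivAt u (u' x) x)
    (hv_deriv : ∀ x ∈ Ioo a b, HasDerivAt v (v' x) x) (hua : u a = 0) (hva : v a = 0) :
    ∫ x in a..b, (‖u x‖ ^ 2 + ‖v x‖ ^ 2)
      ≤ (b - a) ^ 2 * ∫ x in a..b, (‖u' x + l • v x‖ ^ 2 + ‖v' x - l • u x‖ ^ 2) := by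
  have rotate (σ : ℂ) (hσ : σ * σ = -1) (hσre : σ.re = 0) :
      ∫ x in a..b, ‖u x + σ • v x‖ ^ 2 ≤ (b - a) ^ 2 *
        ∫ x in a..b, ‖(u' x + l • v x) + σ • (v' x - l • u x)‖ ^ 2 := by
    have hid (x : ℝ) : (u' x + σ • v' x) - (σ * l) • (u x + σ • v x)
        = (u' x + l • v x) + σ • (v' x - l • u x) := by
      linear_combination (norm := module) hσ • ((-l) • v x)
    simpa only [hid] using integral_norm_sq_le_of_hasDerivAt_sub_smul
      (w := fun x ↦ u x + σ • v x) (w' := fun x ↦ u' x + σ • v' x) (μ := σ * l) (by simp [hσre])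
      hab (hu.add (continuousOn_const.smul hv)) (hu'.add (continuousOn_const.smul hv'))
      (fun x hx ↦ (hu_deriv x hx).add ((hv_deriv x hx).const_smul σ)) (by simp [hua, hva])
  have hplus := rotate Complex.I (by simp) (by simp)
  have hminus := rotate (-Complex.I) (by simp) (by simp)
  simp only [neg_smul, ← sub_eq_add_neg] at hminus
  have hP : ContinuousOn (fun x ↦ u' x + l • v x) (Icc a b) := hu'.add (continuousOn_const.smul hv)
  have hQ : ContinuousOn (fun x ↦ v' x - l • u x) (Icc a b) := hv'.sub (continuousOn_const.smul hu)
  have hsum := add_le_add hplus hminus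
  rw [← mul_add, integral_norm_add_I_smul_sq_add_integral_norm_sub_I_smul_sq hab hu hv,
    integral_norm_add_I_smul_sq_add_integral_norm_sub_I_smul_sq hab hP hQ] at hsum
  linarith

end

section

variable {E : Type*} [NormedAddCommGroup E]

theorem norm_add_sq_le_two_mul (x y : E) : ‖x + y‖ ^ 2 ≤ 2 * (‖x‖ ^ 2 + ‖y‖ ^ 2) :=
  (pow_le_pow_left₀ (norm_nonneg _) (norm_add_le x y) 2).trans add_sq_le

theorem norm_sub_sq_le_two_mul (x y : E) : ‖x - y‖ ^ 2 ≤ 2 * (‖x‖ ^ 2 + ‖y‖ ^ 2) :=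
  (pow_le_pow_left₀ (norm_nonneg _) (norm_sub_le x y) 2).trans add_sq_le

variable [NormedSpace ℝ E]

theorem norm_add_smul_sq_le (l : ℝ) (x y z : E) :
    ‖x + l • z‖ ^ 2 ≤ 2 * (‖x + y + l • z‖ ^ 2 + ‖y‖ ^ 2) := by
  convert norm_sub_sq_le_two_mul (x + y + l • z) y using 3; abel

theorem bresse_density_le (l : ℝ) (v₁ v₃ v₅ v₁' v₃' v₅' : E) :
    ‖v₁'‖ ^ 2 + ‖v₃'‖ ^ 2 + ‖v₅'‖ ^ 2 + ‖v₁‖ ^ 2 + ‖v₃‖ ^ 2 + ‖v₅‖ ^ 2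
      ≤ 4 * ‖v₁' + v₃ + l • v₅‖ ^ 2 + ‖v₃'‖ ^ 2 + 2 * ‖v₅' - l • v₁‖ ^ 2 + 5 * ‖v₃‖ ^ 2
        + (1 + 2 * l ^ 2) * (‖v₁‖ ^ 2 + ‖v₅‖ ^ 2) := by
  have h₁ := norm_add_smul_sq_le l v₁' v₃ v₅
  have h₂ := norm_sub_sq_le_two_mul (v₁' + l • v₅) (l • v₅)
  have h₃ := norm_add_sq_le_two_mul (v₅' - l • v₁) (l • v₁)
  simp only [add_sub_cancel_right, sub_add_cancel, norm_smul, mul_pow, Real.norm_eq_abs,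
    sq_abs] at h₂ h₃
  linarith

theorem integral_bresse_density_le {v₁ v₃ v₅ v₁' v₃' v₅' : ℝ → E} (l : ℝ) (hab : a ≤ b)
    (hv₁ : ContinuousOn v₁ (Icc a b)) (hv₃ : ContinuousOn v₃ (Icc a b))
    (hv₅ : ContinuousOn v₅ (Icc a b)) (hv₁' : ContinuousOn v₁' (Icc a b))
    (hv₃' : ContinuousOn v₃' (Icc a b)) (hv₅' : ContinuousOn v₅' (Icc a b)) :
    ∫ x in a..b, (‖v₁' x‖ ^ 2 + ‖v₃' x‖ ^ 2 + ‖v₅' x‖ ^ 2 + ‖v₁ x‖ ^ 2 + ‖v₃ x‖ ^ 2 + ‖v₅ x‖ ^ 2)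
      ≤ 4 * (∫ x in a..b, ‖v₁' x + v₃ x + l • v₅ x‖ ^ 2) + (∫ x in a..b, ‖v₃' x‖ ^ 2)
        + 2 * (∫ x in a..b, ‖v₅' x - l • v₁ x‖ ^ 2) + 5 * (∫ x in a..b, ‖v₃ x‖ ^ 2)
        + (1 + 2 * l ^ 2) * ((∫ x in a..b, ‖v₁ x‖ ^ 2) + ∫ x in a..b, ‖v₅ x‖ ^ 2) := by
  refine (integral_mono_on_of_continuousOn hab (by fun_prop) (by fun_prop)
    fun x _ ↦ bresse_density_le l (v₁ x) (v₃ x) (v₅ x) (v₁' x) (v₃' x) (v₅' x)).trans_eq ?_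
  simp (disch := exact ContinuousOn.intervalIntegrable_of_Icc hab (by fun_prop)) only
    [intervalIntegral.integral_add, intervalIntegral.integral_const_mul]

end

theorem bresse_energy_le {F : Type*} [NormedAddCommGroup F] [InnerProductSpace ℂ F]
    [CompleteSpace F] {v₁ v₃ v₅ v₁' v₃' v₅' : ℝ → F} (l : ℝ) (hab : a ≤ b)
    (hv₁ : ContinuousOn v₁ (Icc a b)) (hv₃ : ContinuousOn v₃ (Icc a b))
    (hv₅ : ContinuousOn v₅ (Icc a b)) (hv₁' : ContinuousOn v₁' (Icc a b))
    (hv₃' : ContinuousOn v₃' (Icc a b)) (hv₅' : ContinuousOn v₅' (Icc a b))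
    (hd₁ : ∀ x ∈ Ioo a b, HasDerivAt v₁ (v₁' x) x) (hd₃ : ∀ x ∈ Ioo a b, HasDerivAt v₃ (v₃' x) x)
    (hd₅ : ∀ x ∈ Ioo a b, HasDerivAt v₅ (v₅' x) x) (h₁ : v₁ a = 0) (h₃ : v₃ a = 0)
    (h₅ : v₅ a = 0) :
    ∫ x in a..b, (‖v₁' x‖ ^ 2 + ‖v₃' x‖ ^ 2 + ‖v₅' x‖ ^ 2 + ‖v₁ x‖ ^ 2 + ‖v₃ x‖ ^ 2 + ‖v₅ x‖ ^ 2)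
      ≤ (4 + 5 * (b - a) ^ 2 + (1 + 2 * l ^ 2) * (b - a) ^ 2 * (3 + 2 * (b - a) ^ 2)) *
        ∫ x in a..b, (‖v₁' x + v₃ x + l • v₅ x‖ ^ 2 + ‖v₃' x‖ ^ 2 + ‖v₅' x - l • v₁ x‖ ^ 2) := by
  set IA := ∫ x in a..b, ‖v₁' x + v₃ x + l • v₅ x‖ ^ 2
  set IB := ∫ x in a..b, ‖v₃' x‖ ^ 2
  set IC := ∫ x in a..b, ‖v₅' x - l • v₁ x‖ ^ 2
  set J₃ := ∫ x in a..b, ‖v₃ x‖ ^ 2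
  have hIA : 0 ≤ IA := integral_nonneg hab fun _ _ ↦ sq_nonneg _
  have hIB : 0 ≤ IB := integral_nonneg hab fun _ _ ↦ sq_nonneg _
  have hIC : 0 ≤ IC := integral_nonneg hab fun _ _ ↦ sq_nonneg _
  have hJ₃ : J₃ ≤ (b - a) ^ 2 * (IA + IB + IC) :=
    (integral_norm_sq_le_of_hasDerivAt hab hv₃ hv₃' hd₃ h₃).trans (by gcongr; linarith)
  have hshear : ∫ x in a..b, ‖v₁' x + l • v₅ x‖ ^ 2 ≤ 2 * IA + 2 * J₃ := by
    refine (integral_mono_on_of_continuousOn hab (by fun_prop) (by fun_prop)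
      fun x _ ↦ norm_add_smul_sq_le l (v₁' x) (v₃ x) (v₅ x)).trans_eq ?_
    simp (disch := exact ContinuousOn.intervalIntegrable_of_Icc hab (by fun_prop)) only
      [intervalIntegral.integral_add, intervalIntegral.integral_const_mul]
    ring
  have hrot := integral_norm_sq_add_norm_sq_le_of_hasDerivAt l hab hv₁ hv₅ hv₁' hv₅' hd₁ hd₅ h₁ h₅
  simp (disch := exact ContinuousOn.intervalIntegrable_of_Icc hab (by fun_prop)) only
    [intervalIntegral.integral_add] at hrot
  have hS : ∫ x in a..b, (‖v₁' x + v₃ x + l • v₅ x‖ ^ 2 + ‖v₃' x‖ ^ 2 + ‖v₅' x - l • v₁ x‖ ^ 2)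
      = IA + IB + IC := by
    simp (disch := exact ContinuousOn.intervalIntegrable_of_Icc hab (by fun_prop)) only
      [intervalIntegral.integral_add]
    rfl
  rw [hS]
  have hJ := hrot.trans (mul_le_mul_of_nonneg_left
    (show _ ≤ (3 + 2 * (b - a) ^ 2) * (IA + IB + IC) by linarith) (sq_nonneg (b - a)))
  linarith [integral_bresse_density_le l hab hv₁ hv₃ hv₅ hv₁' hv₃' hv₅',
    mul_le_mul_of_nonneg_left hJ (by positivity : (0 : ℝ) ≤ 1 + 2 * l ^ 2)]

theorem min_mul_integral_le {E : Type*} [NormedAddCommGroup E] {p q r : ℝ → E} (k₁ k₂ k₃ : ℝ)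
    (hab : a ≤ b) (hp : ContinuousOn p (Icc a b)) (hq : ContinuousOn q (Icc a b))
    (hr : ContinuousOn r (Icc a b)) :
    min k₁ (min k₂ k₃) * ∫ x in a..b, (‖p x‖ ^ 2 + ‖q x‖ ^ 2 + ‖r x‖ ^ 2)
      ≤ ∫ x in a..b, (k₁ * ‖p x‖ ^ 2 + k₂ * ‖q x‖ ^ 2 + k₃ * ‖r x‖ ^ 2) := by
  rw [← intervalIntegral.integral_const_mul]
  refine integral_mono_on_of_continuousOn hab (by fun_prop) (by fun_prop) fun x _ ↦ ?_
  rw [mul_add, mul_add]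
  gcongr
  · exact min_le_left _ _
  · exact (min_le_right _ _).trans (min_le_left _ _)
  · exact (min_le_right _ _).trans (min_le_right _ _)

theorem DifferentiableOn.hasDerivAt_derivWithin_Icc {F : Type*} [NormedAddCommGroup F]
    [NormedSpace ℝ F] {f : ℝ → F} (hf : DifferentiableOn ℝ f (Icc a b)) {x : ℝ}
    (hx : x ∈ Ioo a b) : HasDerivAt f (derivWithin f (Icc a b) x) x :=
  (hf x (Ioo_subset_Icc_self hx)).hasDerivWithinAt.hasDerivAt (Icc_mem_nhds hx.1 hx.2)

theorem bresse_form_coercive_general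
    (k₁ k₂ k₃ l L : ℝ)
    (hk1 : 0 < k₁) (hk2 : 0 < k₂) (hk3 : 0 < k₃) (hL : 0 < L) :
    ∃ c > 0, ∀ v1 v3 v5 : ℝ → ℂ,
      ContDiffOn ℝ 1 v1 (Icc 0 L) → ContDiffOn ℝ 1 v3 (Icc 0 L) →
      ContDiffOn ℝ 1 v5 (Icc 0 L) →
      v1 0 = 0 → v1 L = 0 → v3 0 = 0 → v3 L = 0 → v5 0 = 0 → v5 L = 0 →
      (∫ x in (0 : ℝ)..L,
        (k₁ * ‖deriv v1 x + v3 x + (l : ℂ) * v5 x‖ ^ 2 + k₂ * ‖deriv v3 x‖ ^ 2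
          + k₃ * ‖deriv v5 x - (l : ℂ) * v1 x‖ ^ 2))
      ≥ c * ∫ x in (0 : ℝ)..L,
        (‖deriv v1 x‖ ^ 2 + ‖deriv v3 x‖ ^ 2 + ‖deriv v5 x‖ ^ 2
          + ‖v1 x‖ ^ 2 + ‖v3 x‖ ^ 2 + ‖v5 x‖ ^ 2) := by
  set K := 4 + 5 * L ^ 2 + (1 + 2 * l ^ 2) * L ^ 2 * (3 + 2 * L ^ 2)
  have hK : 0 < K := by positivity
  have hm : 0 < min k₁ (min k₂ k₃) := lt_min hk1 (lt_min hk2 hk3)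
  refine ⟨min k₁ (min k₂ k₃) / K, div_pos hm hK, ?_⟩
  intro v1 v3 v5 hv1 hv3 hv5 h10 _ h30 _ h50 _
  have hc1 := hv1.continuousOn
  have hc3 := hv3.continuousOn
  have hc5 := hv5.continuousOn
  have hd1 := hv1.continuousOn_derivWithin (uniqueDiffOn_Icc hL) le_rfl
  have hd3 := hv3.continuousOn_derivWithin (uniqueDiffOn_Icc hL) le_rfl
  have hd5 := hv5.continuousOn_derivWithin (uniqueDiffOn_Icc hL) le_rfl
  have henergy := bresse_energy_le l hL.le hc1 hc3 hc5 hd1 hd3 hd5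
    (fun _ ↦ (hv1.differentiableOn one_ne_zero).hasDerivAt_derivWithin_Icc)
    (fun _ ↦ (hv3.differentiableOn one_ne_zero).hasDerivAt_derivWithin_Icc)
    (fun _ ↦ (hv5.differentiableOn one_ne_zero).hasDerivAt_derivWithin_Icc) h10 h30 h50
  rw [sub_zero] at henergy
  have hform := (mul_comm_div _ K _).trans_le ((mul_le_mul_of_nonneg_left
    ((div_le_iff₀' hK).2 henergy) hm.le).trans
    (min_mul_integral_le k₁ k₂ k₃ hL.le (by fun_prop) hd3 (by fun_prop)))
  -- `deriv` is junk at the endpoints, where `v` is only constrained from one side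
  have hderiv : ∀ x ∈ Ioo 0 L, ∀ f : ℝ → ℂ, deriv f x = derivWithin f (Icc 0 L) x :=
    fun x hx _ ↦ (derivWithin_of_mem_nhds (Icc_mem_nhds hx.1 hx.2)).symm
  rw [ge_iff_le]
  convert hform using 1
  · congr 1
    exact integral_congr_Ioo_of_le hL.le fun x hx ↦ by simp only [hderiv x hx]
  · exact integral_congr_Ioo_of_le hL.le fun x hx ↦ by simp only [hderiv x hx, Complex.real_smul]

/-- Coercivity of the static Bresse form on Dirichlet functions. -/
theorem bresse_form_coercive
    (k₁ k₂ k₃ l L : ℝ)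
    (hk1 : 0 < k₁) (hk2 : 0 < k₂) (hk3 : 0 < k₃) (hl : 0 < l) (hL : 0 < L) :
    ∃ c > 0, ∀ v1 v3 v5 : ℝ → ℂ,
      ContDiffOn ℝ 1 v1 (Icc 0 L) → ContDiffOn ℝ 1 v3 (Icc 0 L) →
      ContDiffOn ℝ 1 v5 (Icc 0 L) →
      v1 0 = 0 → v1 L = 0 → v3 0 = 0 → v3 L = 0 → v5 0 = 0 → v5 L = 0 →
      (∫ x in (0 : ℝ)..L,
        (k₁ * ‖deriv v1 x + v3 x + (l : ℂ) * v5 x‖ ^ 2 + k₂ * ‖deriv v3 x‖ ^ 2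
          + k₃ * ‖deriv v5 x - (l : ℂ) * v1 x‖ ^ 2))
      ≥ c * ∫ x in (0 : ℝ)..L,
        (‖deriv v1 x‖ ^ 2 + ‖deriv v3 x‖ ^ 2 + ‖deriv v5 x‖ ^ 2
          + ‖v1 x‖ ^ 2 + ‖v3 x‖ ^ 2 + ‖v5 x‖ ^ 2) :=
  bresse_form_coercive_general k₁ k₂ k₃ l L hk1 hk2 hk3 hL
end

section
/- Let λ be a real number and let v¹, v³ : [0,β] → ℂ be C² functions such that for all x ∈ (0,β): (λ² − l²k₃/ρ₁) v¹ + (k₁/ρ₁)(v¹′ + v³)′ = 0, (λ² − k₁/ρ₂) v³ + (k₂/ρ₂) v³′′ − (k₁/ρ₂) v¹′ = 0, and k₁ (v¹′ + v³) = − k₃ v¹′ (′ denoting d/dx), with v¹(0) = 0 and v³(0) = 0. Then v¹ ≡ 0 and v³ ≡ 0 on [0,β]. (This covers the three cases λ² = l²k₃/ρ₁, λ² > l²k₃/ρ₁ and λ² < l²k₃/ρ₁ arising in the strong stability proof.) -/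
open Set Filter Topology

/-! Eliminating `v¹′` with the constitutive relation `k₁ (v¹′ + v³) = -k₃ v¹′` turns the first
equation into `v³′ = d v¹`, while that relation itself reads `v¹′ = c v³`. So `(v¹, v³)` solves a
linear first-order system with zero initial data, and Grönwall's inequality forces it to vanish. -/

section LinearODE

variable {E : Type*} [NormedAddCommGroup E] [NormedSpace ℝ E] {a b : ℝ}

theorem eqOn_zero_of_hasDerivWithinAt_clm (A : E →L[ℝ] E) {f : ℝ → E}
    (hf : ContinuousOn f (Icc a b))
    (hf' : ∀ x ∈ Ico a b, HasDerivWithinAt f (A (f x)) (Ici x) x) (ha : f a = 0) :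
    EqOn f 0 (Icc a b) :=
  eq_zero_of_abs_deriv_le_mul_abs_self_of_eq_zero_right hf hf' ha fun x _ ↦ A.le_opNorm (f x)

theorem eqOn_zero_of_hasDerivWithinAt_smul_swap (c d : ℝ) {f g : ℝ → E}
    (hf : ContinuousOn f (Icc a b)) (hg : ContinuousOn g (Icc a b))
    (hf' : ∀ x ∈ Ico a b, HasDerivWithinAt f (c • g x) (Ici x) x)
    (hg' : ∀ x ∈ Ico a b, HasDerivWithinAt g (d • f x) (Ici x) x)
    (hfa : f a = 0) (hga : g a = 0) :
    ∀ x ∈ Icc a b, f x = 0 ∧ g x = 0 := fun x hx ↦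
  Prod.mk_eq_zero.mp <| eqOn_zero_of_hasDerivWithinAt_clm
    ((c • ContinuousLinearMap.snd ℝ E E).prod (d • ContinuousLinearMap.fst ℝ E E))
    (hf.prodMk hg) (fun x hx ↦ (hf' x hx).prodMk (hg' x hx)) (by simp [hfa, hga]) hx

theorem hasDerivWithinAt_Ici_of_eqOn_Ioo {f w : ℝ → E} (hf : ContDiffOn ℝ 1 f (Icc a b))
    (hw : ContinuousOn w (Icc a b)) (h : EqOn (deriv f) w (Ioo a b)) :
    ∀ x ∈ Ico a b, HasDerivWithinAt f (w x) (Ici x) x := by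
  intro x hx
  have hab : a < b := hx.1.trans_lt hx.2
  have hderiv : EqOn (derivWithin f (Icc a b)) w (Icc a b) := by
    refine EqOn.of_subset_closure (fun y hy ↦ ?_)
      (hf.continuousOn_derivWithin (uniqueDiffOn_Icc hab) le_rfl) hw Ioo_subset_Icc_self
      (closure_Ioo hab.ne).ge
    rw [derivWithin_of_mem_nhds (Icc_mem_nhds hy.1 hy.2)]
    exact h hy
  have hx' : x ∈ Icc a b := Ico_subset_Icc_self hx
  rw [← hderiv hx']
  exact ((hf.differentiableOn one_ne_zero x hx').hasDerivWithinAt).mono_of_mem_nhdsWithin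
    (Icc_mem_nhdsGE_of_mem hx)

end LinearODE

theorem bresse_eigen_vanish_damped_general
    (ρ₁ k₁ k₃ l β : ℝ)
    (hrho1 : 0 < ρ₁) (hk1 : 0 < k₁) (hk3 : 0 < k₃)
    (lam : ℝ)
    (v1 v3 : ℝ → ℂ)
    (hv1 : ContDiffOn ℝ 2 v1 (Icc 0 β)) (hv3 : ContDiffOn ℝ 2 v3 (Icc 0 β))
    (heq1 : ∀ x ∈ Ioo (0 : ℝ) β,
      ((lam ^ 2 - l ^ 2 * k₃ / ρ₁ : ℝ) : ℂ) * v1 x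
        + ((k₁ / ρ₁ : ℝ) : ℂ) * deriv (fun y => deriv v1 y + v3 y) x = 0)
    (heq3 : ∀ x ∈ Ioo (0 : ℝ) β,
      (k₁ : ℂ) * (deriv v1 x + v3 x) = -(k₃ : ℂ) * deriv v1 x)
    (hbc : v1 0 = 0 ∧ v3 0 = 0) :
    ∀ x ∈ Icc (0 : ℝ) β, v1 x = 0 ∧ v3 x = 0 := by
  set c : ℝ := -(k₁ / (k₁ + k₃))
  set d : ℝ := -((lam ^ 2 - l ^ 2 * k₃ / ρ₁) * ρ₁ * (k₁ + k₃) / (k₁ * k₃))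
  have hk : (k₁ : ℂ) + k₃ ≠ 0 := by exact_mod_cast (add_pos hk1 hk3).ne'
  have hk₁ : (k₁ : ℂ) ≠ 0 := by exact_mod_cast hk1.ne'
  have hk₃ : (k₃ : ℂ) ≠ 0 := by exact_mod_cast hk3.ne'
  have hρ₁ : (ρ₁ : ℂ) ≠ 0 := by exact_mod_cast hrho1.ne'
  have hD1 : EqOn (deriv v1) (fun x ↦ c • v3 x) (Ioo 0 β) := fun x hx ↦ by
    simp only [c, Complex.real_smul]
    push_cast
    field_simp
    linear_combination heq3 x hx
  have hD3 : EqOn (deriv v3) (fun x ↦ d • v1 x) (Ioo 0 β) := fun x hx ↦ by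
    have hsum : (fun y ↦ deriv v1 y + v3 y) =ᶠ[𝓝 x] fun y ↦ ((c : ℂ) + 1) * v3 y := by
      filter_upwards [isOpen_Ioo.mem_nhds hx] with y hy
      simp only [hD1 hy, Complex.real_smul]
      ring
    have h1 := heq1 x hx
    rw [hsum.deriv_eq, deriv_const_mul _ ((hv3.differentiableOn two_ne_zero x
      (Ioo_subset_Icc_self hx)).differentiableAt (Icc_mem_nhds hx.1 hx.2))] at h1
    simp only [c, d, Complex.real_smul] at h1 ⊢
    push_cast at h1 ⊢
    field_simp at h1 ⊢
    linear_combination h1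
  exact eqOn_zero_of_hasDerivWithinAt_smul_swap c d hv1.continuousOn hv3.continuousOn
    (hasDerivWithinAt_Ici_of_eqOn_Ioo (hv1.of_le one_le_two) (hv3.continuousOn.const_smul c) hD1)
    (hasDerivWithinAt_Ici_of_eqOn_Ioo (hv3.of_le one_le_two) (hv1.continuousOn.const_smul d) hD3)
    hbc.1 hbc.2

/-- Vanishing of eigenfunction components on the damped region `(0,β)`. -/
theorem bresse_eigen_vanish_damped
    (ρ₁ ρ₂ k₁ k₂ k₃ l β : ℝ)
    (hrho1 : 0 < ρ₁) (hrho2 : 0 < ρ₂) (hk1 : 0 < k₁) (hk2 : 0 < k₂) (hk3 : 0 < k₃)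
    (hl : 0 < l) (hbeta : 0 < β)
    (lam : ℝ)
    (v1 v3 : ℝ → ℂ)
    (hv1 : ContDiffOn ℝ 2 v1 (Icc 0 β)) (hv3 : ContDiffOn ℝ 2 v3 (Icc 0 β))
    (heq1 : ∀ x ∈ Ioo (0 : ℝ) β,
      ((lam ^ 2 - l ^ 2 * k₃ / ρ₁ : ℝ) : ℂ) * v1 x
        + ((k₁ / ρ₁ : ℝ) : ℂ) * deriv (fun y => deriv v1 y + v3 y) x = 0)
    (heq2 : ∀ x ∈ Ioo (0 : ℝ) β,
      ((lam ^ 2 - k₁ / ρ₂ : ℝ) : ℂ) * v3 x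
        + ((k₂ / ρ₂ : ℝ) : ℂ) * deriv (deriv v3) x
        - ((k₁ / ρ₂ : ℝ) : ℂ) * deriv v1 x = 0)
    (heq3 : ∀ x ∈ Ioo (0 : ℝ) β,
      (k₁ : ℂ) * (deriv v1 x + v3 x) = -(k₃ : ℂ) * deriv v1 x)
    (hbc : v1 0 = 0 ∧ v3 0 = 0) :
    ∀ x ∈ Icc (0 : ℝ) β, v1 x = 0 ∧ v3 x = 0 :=
  bresse_eigen_vanish_damped_general ρ₁ k₁ k₃ l β hrho1 hk1 hk3 lam v1 v3 hv1 hv3 heq1 heq3 hbc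
end
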